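/- Let λ and μ be vectors of nonnegative integers of length n with equal total sum r. Then there exists exactly one n×n matrix A over ℕ with row-sum vector λ and column-sum vector μ such that for all row indices i < k and column indices j < l, at least one of the anti-diagonal entries a_{il}, a_{kj} is zero. -/

import Mathlib

/-!
Write `L i` and `M j` for the partial sums of `λ` and `μ` over the first `i` rows and the first
`j` columns. In an anti-generic matrix either the block of rows `< i` and columns `≥ j` or the
block of rows `≥ i` and columns `< j` vanishes, so the sum of the north-west `i × j` corner equals
`L i` or `M j`; since it is bounded by both, it is `min (L i) (M j)`. These corner sums determine
the matrix by inclusion–exclusion, which gives uniqueness. For existence, take as entry `(i, j)`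
the length of the overlap of the intervals `[L i, L (i + 1))` and `[M j, M (j + 1))`.
-/

open Finset

/-- A matrix is anti-generic if every 2×2 submatrix has a zero anti-diagonal entry. -/
def AntiGeneric {n : ℕ} (A : Matrix (Fin n) (Fin n) ℕ) : Prop :=
  ∀ i k j l : Fin n, i < k → j < l → A i l = 0 ∨ A k j = 0

open scoped Matrix

section PrefixSum

variable {M : Type*} {n : ℕ}

def prefixSum [AddCommMonoid M] (f : Fin n → M) (i : ℕ) : M :=
  ∑ a : Fin n with a.val < i, f a

section AddCommMonoid

variable [AddCommMonoid M] (f : Fin n → M)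

@[simp]
lemma prefixSum_zero : prefixSum f 0 = 0 := by
  simp [prefixSum]

lemma prefixSum_succ (i : Fin n) : prefixSum f (i + 1) = prefixSum f i + f i := by
  have hfilter : univ.filter (fun a : Fin n => a.val < i + 1) =
      insert i (univ.filter fun a : Fin n => a.val < i) := by
    ext a
    simp only [mem_filter, mem_univ, true_and, mem_insert, Fin.ext_iff]
    omega
  rw [prefixSum, hfilter, sum_insert (by simp), add_comm]
  rfl

lemma prefixSum_of_le {i : ℕ} (hi : n ≤ i) : prefixSum f i = ∑ a, f a :=
  sum_filter_of_ne fun a _ _ => a.isLt.trans_le hi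

end AddCommMonoid

lemma prefixSum_mono [AddCommMonoid M] [PartialOrder M] [CanonicallyOrderedAdd M]
    (f : Fin n → M) : Monotone (prefixSum f) := fun _ _ hij =>
  sum_le_sum_of_subset fun a => by
    simp only [mem_filter, mem_univ, true_and]
    omega

lemma prefixSum_le_prefixSum [AddCommMonoid M] [Preorder M] [IsOrderedAddMonoid M]
    {f g : Fin n → M} (hfg : ∀ a, f a ≤ g a) (i : ℕ) :
    prefixSum f i ≤ prefixSum g i :=
  sum_le_sum fun a _ => hfg a

end PrefixSum

section BlockSum

variable {M : Type*} {n : ℕ}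

def blockSum [AddCommMonoid M] (A : Matrix (Fin n) (Fin n) M) (i j : ℕ) : M :=
  prefixSum (fun a => prefixSum (A a) j) i

lemma blockSum_transpose [AddCommMonoid M] (A : Matrix (Fin n) (Fin n) M) (i j : ℕ) :
    blockSum Aᵀ j i = blockSum A i j := by
  simp only [blockSum, prefixSum, Matrix.transpose_apply]
  exact sum_comm

lemma blockSum_succ_succ [AddCommMonoid M] (A : Matrix (Fin n) (Fin n) M) (i j : Fin n) :
    blockSum A (i + 1) (j + 1) + blockSum A i j =
      blockSum A (i + 1) j + blockSum A i (j + 1) + A i j := by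
  simp only [blockSum, prefixSum_succ (fun a => prefixSum (A a) _) i, prefixSum_succ (A i) j]
  abel

lemma Matrix.ext_of_blockSum [AddCancelCommMonoid M] {A B : Matrix (Fin n) (Fin n) M}
    (h : ∀ i j, blockSum A i j = blockSum B i j) : A = B := by
  ext i j
  have hA := blockSum_succ_succ A i j
  have hB := blockSum_succ_succ B i j
  simp only [h] at hA
  exact add_left_cancel (hA.symm.trans hB)

lemma blockSum_le_prefixSum_row {A : Matrix (Fin n) (Fin n) ℕ} {lam : Fin n → ℕ}
    (hrow : ∀ i, ∑ j, A i j = lam i) (i j : ℕ) : blockSum A i j ≤ prefixSum lam i :=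
  prefixSum_le_prefixSum (fun a => (hrow a).symm ▸ sum_le_sum_of_subset (filter_subset _ _)) i

lemma blockSum_le_prefixSum_col {A : Matrix (Fin n) (Fin n) ℕ} {mu : Fin n → ℕ}
    (hcol : ∀ i, ∑ j, A j i = mu i) (i j : ℕ) : blockSum A i j ≤ prefixSum mu j :=
  blockSum_transpose A i j ▸ blockSum_le_prefixSum_row hcol j i

lemma blockSum_eq_prefixSum_row {A : Matrix (Fin n) (Fin n) ℕ} {lam : Fin n → ℕ}
    (hrow : ∀ i, ∑ j, A i j = lam i) {i j : ℕ}
    (hzero : ∀ a b : Fin n, (a : ℕ) < i → j ≤ b → A a b = 0) :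
    blockSum A i j = prefixSum lam i := by
  unfold blockSum prefixSum
  refine sum_congr rfl fun a ha => ?_
  rw [← hrow a]
  refine sum_filter_of_ne fun b _ hab => ?_
  by_contra hb
  exact hab (hzero a b (by simpa using ha) (not_lt.mp hb))

end BlockSum

namespace AntiGeneric

variable {n : ℕ} {A : Matrix (Fin n) (Fin n) ℕ}

lemma blockSum_eq_min (hA : AntiGeneric A) {lam mu : Fin n → ℕ}
    (hrow : ∀ i, ∑ j, A i j = lam i) (hcol : ∀ i, ∑ j, A j i = mu i) (i j : ℕ) :
    blockSum A i j = min (prefixSum lam i) (prefixSum mu j) := by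
  have hle_row := blockSum_le_prefixSum_row hrow i j
  have hle_col := blockSum_le_prefixSum_col hcol i j
  by_cases htopRight : ∀ a b : Fin n, (a : ℕ) < i → j ≤ b → A a b = 0
  · have := blockSum_eq_prefixSum_row hrow htopRight
    omega
  · push Not at htopRight
    obtain ⟨a, b, ha, hb, hab⟩ := htopRight
    have hbottomLeft : ∀ b' a' : Fin n, (b' : ℕ) < j → i ≤ a' → Aᵀ b' a' = 0 :=
      fun b' a' hb' ha' =>
        (hA a a' b' b (Fin.lt_def.mpr (by omega)) (Fin.lt_def.mpr (by omega))).resolve_left hab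
    have := blockSum_transpose A i j ▸ blockSum_eq_prefixSum_row hcol hbottomLeft
    omega

lemma eq_of_sums_eq {B : Matrix (Fin n) (Fin n) ℕ} (hA : AntiGeneric A) (hB : AntiGeneric B)
    (hrow : ∀ i, ∑ j, A i j = ∑ j, B i j) (hcol : ∀ i, ∑ j, A j i = ∑ j, B j i) : A = B :=
  Matrix.ext_of_blockSum fun i j => by
    rw [hA.blockSum_eq_min hrow hcol, hB.blockSum_eq_min (fun _ => rfl) (fun _ => rfl)]

end AntiGeneric

section StairMatrix

variable {n : ℕ}

def stairMatrix (lam mu : Fin n → ℕ) : Matrix (Fin n) (Fin n) ℕ :=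
  fun i j => min (prefixSum lam (i + 1)) (prefixSum mu (j + 1)) -
    max (prefixSum lam i) (prefixSum mu j)

lemma stairMatrix_transpose (lam mu : Fin n → ℕ) :
    (stairMatrix lam mu)ᵀ = stairMatrix mu lam := by
  ext i j
  simp only [Matrix.transpose_apply, stairMatrix, min_comm, max_comm]

lemma antiGeneric_stairMatrix (lam mu : Fin n → ℕ) : AntiGeneric (stairMatrix lam mu) := by
  intro i k j l hik hjl
  have hlam : prefixSum lam (i + 1) ≤ prefixSum lam k := prefixSum_mono lam hik
  have hmu : prefixSum mu (j + 1) ≤ prefixSum mu l := prefixSum_mono mu hjl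
  simp only [stairMatrix]
  omega

lemma sum_stairMatrix_row {lam mu : Fin n → ℕ} (hsum : ∑ i, lam i = ∑ i, mu i) (i : Fin n) :
    ∑ j, stairMatrix lam mu i j = lam i := by
  -- `M t` clamped to the interval `[L i, L (i + 1)]`; the row telescopes along it
  set g : ℕ → ℕ := fun t => max (prefixSum lam i) (min (prefixSum lam (i + 1)) (prefixSum mu t))
  have hg : Monotone g := fun a b hab => by
    have := prefixSum_mono mu hab
    simp only [g]
    omega
  have hlam_succ := prefixSum_succ lam i
  have hentry (j : Fin n) : stairMatrix lam mu i j = g (j + 1) - g j := by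
    have : prefixSum mu j ≤ prefixSum mu (j + 1) := prefixSum_mono mu (Nat.le_succ j)
    simp only [stairMatrix, g]
    omega
  have hlam_le : prefixSum lam (i + 1) ≤ prefixSum mu n := by
    rw [prefixSum_of_le mu le_rfl, ← hsum, ← prefixSum_of_le lam le_rfl]
    exact prefixSum_mono lam i.isLt
  calc ∑ j, stairMatrix lam mu i j = ∑ t ∈ range n, (g (t + 1) - g t) := by
        simp only [hentry, Fin.sum_univ_eq_sum_range (fun t => g (t + 1) - g t)]
    _ = g n - g 0 := sum_range_tsub hg n
    _ = lam i := by
        simp only [g, prefixSum_zero]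
        omega

lemma sum_stairMatrix_col {lam mu : Fin n → ℕ} (hsum : ∑ i, lam i = ∑ i, mu i) (j : Fin n) :
    ∑ i, stairMatrix lam mu i j = mu j := by
  simpa only [← stairMatrix_transpose lam mu, Matrix.transpose_apply] using
    sum_stairMatrix_row hsum.symm j

end StairMatrix

theorem stmt6 {n r : ℕ} (lam mu : Fin n → ℕ)
    (h1 : ∑ i, lam i = r) (h2 : ∑ i, mu i = r) :
    ∃! A : Matrix (Fin n) (Fin n) ℕ,
      AntiGeneric A ∧ (∀ i, ∑ j, A i j = lam i) ∧ (∀ i, ∑ j, A j i = mu i) := by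
  have hsum : ∑ i, lam i = ∑ i, mu i := h1.trans h2.symm
  refine ⟨stairMatrix lam mu,
    ⟨antiGeneric_stairMatrix lam mu, sum_stairMatrix_row hsum, sum_stairMatrix_col hsum⟩, ?_⟩
  rintro B ⟨hB, hBrow, hBcol⟩
  refine hB.eq_of_sums_eq (antiGeneric_stairMatrix lam mu) (fun i => ?_) (fun i => ?_)
  · rw [hBrow, sum_stairMatrix_row hsum]
  · rw [hBcol, sum_stairMatrix_col hsum]
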